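/- arXiv:2401.05734 — 3 statements merged into one kernel-verified Lean document; each statement's English description precedes it below -/
import Mathlib

section
/- Let E be a finite-dimensional real inner product space and w_1, ..., w_k a finite family of vectors in E. Then the following are equivalent: (1) there exist strictly positive reals a_1, ..., a_k with a_1 w_1 + ... + a_k w_k = 0; (2) for every v in E, either ⟨v, w_i⟩ = 0 for all i, or there exist indices i, j with ⟨v, w_i⟩ > 0 and ⟨v, w_j⟩ < 0. -/
open Finset

-- Conic Carathéodory
lemma cone_carath_aux {E : Type*} [AddCommGroup E] [Module ℝ E] {k : ℕ} (w : Fin k → E) :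
    ∀ (n : ℕ) (c : Fin k → ℝ), (∀ j, 0 ≤ c j) →
      (Finset.univ.filter fun j => c j ≠ 0).card ≤ n →
    ∃ c' : Fin k → ℝ, (∀ j, 0 ≤ c' j) ∧ (∑ j, c' j • w j = ∑ j, c j • w j) ∧
      LinearIndependent ℝ (fun j : {j : Fin k // c' j ≠ 0} => w j) := by
  classical
  intro n
  induction n with
  | zero =>
    intro c hc hcard
    have hempty : ∀ j, ¬ (c j ≠ 0) := by
      intro j hj
      have : j ∈ Finset.univ.filter fun j => c j ≠ 0 := by simp [hj]
      have := Finset.card_pos.mpr ⟨j, this⟩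
      omega
    have : IsEmpty {j : Fin k // c j ≠ 0} := ⟨fun j => hempty j.1 j.2⟩
    exact ⟨c, hc, rfl, linearIndependent_empty_type⟩
  | succ n ih =>
    intro c hc hcard
    by_cases hli : LinearIndependent ℝ (fun j : {j : Fin k // c j ≠ 0} => w j)
    · exact ⟨c, hc, rfl, hli⟩
    · obtain ⟨g, hg0, i0, hgi0⟩ := Fintype.not_linearIndependent_iff.mp hli
      set d : Fin k → ℝ := fun j => if h : c j ≠ 0 then g ⟨j, h⟩ else 0 with hd
      have hdsupp : ∀ j, d j ≠ 0 → c j ≠ 0 := by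
        intro j hj
        by_contra h
        simp [hd, h] at hj
      have hdsum : ∑ j, d j • w j = 0 := by
        rw [← Finset.sum_filter_of_ne (p := fun j => c j ≠ 0) (fun j _ hj =>
          hdsupp j (fun h => hj (by simp [h])))]
        rw [Finset.sum_subtype (p := fun j => c j ≠ 0) _
          (by intro x; simp) (fun j => d j • w j)]
        calc ∑ j : {j : Fin k // c j ≠ 0}, d j.1 • w j.1
            = ∑ j : {j : Fin k // c j ≠ 0}, g j • w j.1 := by
              apply Finset.sum_congr rfl
              intro j _
              simp [hd, j.2]
          _ = 0 := hg0
      -- obtain e with a positive entry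
      obtain ⟨e, hesum, hesupp, j1, hej1⟩ :
          ∃ e : Fin k → ℝ, (∑ j, e j • w j = 0) ∧ (∀ j, e j ≠ 0 → c j ≠ 0) ∧
            ∃ j, 0 < e j := by
        rcases lt_trichotomy (d i0.1) 0 with h | h | h
        · refine ⟨-d, by simp [hdsum], fun j hj => hdsupp j (by simpa using hj), i0.1, by
            simpa using h⟩
        · exact absurd (by simpa [hd, i0.2] using h) hgi0
        · exact ⟨d, hdsum, hdsupp, i0.1, h⟩
      set P : Finset (Fin k) := Finset.univ.filter fun j => 0 < e j with hP
      have hPne : P.Nonempty := ⟨j1, by simp [hP, hej1]⟩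
      obtain ⟨j0, hj0P, hj0min⟩ := P.exists_min_image (fun j => c j / e j) hPne
      have hej0 : 0 < e j0 := by simpa [hP] using hj0P
      set t : ℝ := c j0 / e j0 with ht
      have ht0 : 0 ≤ t := div_nonneg (hc j0) hej0.le
      set c' : Fin k → ℝ := fun j => c j - t * e j with hc'
      have hc'nonneg : ∀ j, 0 ≤ c' j := by
        intro j
        rcases le_or_gt (e j) 0 with h | h
        · have : t * e j ≤ 0 := mul_nonpos_of_nonneg_of_nonpos ht0 h
          simp only [hc']
          linarith [hc j]
        · have hjP : j ∈ P := by simp [hP, h]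
          have := hj0min j hjP
          have : t * e j ≤ c j := by
            rw [ht]
            exact (le_div_iff₀ h).mp this
          simp only [hc']
          linarith
      have hc'sum : ∑ j, c' j • w j = ∑ j, c j • w j := by
        simp only [hc', sub_smul, Finset.sum_sub_distrib, mul_smul]
        rw [← Finset.smul_sum, hesum, smul_zero, sub_zero]
      have hc'j0 : c' j0 = 0 := by
        simp only [hc', ht]
        field_simp
        ring
      have hsubset : (Finset.univ.filter fun j => c' j ≠ 0) ⊆
          (Finset.univ.filter fun j => c j ≠ 0).erase j0 := by
        intro j hj
        simp only [Finset.mem_filter, Finset.mem_univ, true_and] at hj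
        rw [Finset.mem_erase]
        constructor
        · rintro rfl; exact hj hc'j0
        · simp only [Finset.mem_filter, Finset.mem_univ, true_and]
          intro h
          apply hj
          have he : e j = 0 := by
            by_contra he
            exact hesupp j he h
          simp [hc', h, he]
      have hj0mem : j0 ∈ Finset.univ.filter fun j => c j ≠ 0 := by
        simp only [Finset.mem_filter, Finset.mem_univ, true_and]
        exact hesupp j0 (ne_of_gt hej0)
      have hcard' : (Finset.univ.filter fun j => c' j ≠ 0).card ≤ n := by
        have h1 := Finset.card_le_card hsubset
        rw [Finset.card_erase_of_mem hj0mem] at h1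
        omega
      obtain ⟨c'', h1, h2, h3⟩ := ih c' hc'nonneg hcard'
      exact ⟨c'', h1, h2.trans hc'sum, h3⟩

lemma cone_isClosed {E : Type*} [NormedAddCommGroup E] [InnerProductSpace ℝ E]
    [FiniteDimensional ℝ E] {k : ℕ} (w : Fin k → E) :
    IsClosed {x : E | ∃ c : Fin k → ℝ, (∀ j, 0 ≤ c j) ∧ ∑ j, c j • w j = x} := by
  classical
  have key : {x : E | ∃ c : Fin k → ℝ, (∀ j, 0 ≤ c j) ∧ ∑ j, c j • w j = x} =
      ⋃ (s : {s : Finset (Fin k) // LinearIndependent ℝ (fun j : s => w j)}),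
        (Fintype.linearCombination ℝ (fun j : s.1 => w j)) ''
          {c : s.1 → ℝ | ∀ j, 0 ≤ c j} := by
    ext x
    simp only [Set.mem_setOf_eq, Set.mem_iUnion, Set.mem_image]
    constructor
    · rintro ⟨c, hc, rfl⟩
      obtain ⟨c', hc', hsum, hli⟩ := cone_carath_aux w
        (Finset.univ.filter fun j => c j ≠ 0).card c hc le_rfl
      have hmem : ∀ j : Fin k, j ∈ (Finset.univ.filter fun j => c' j ≠ 0) ↔ c' j ≠ 0 := by
        intro j; simp
      have hli' : LinearIndependent ℝ
          (fun j : (Finset.univ.filter fun j => c' j ≠ 0) => w j) := by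
        have hf : Function.Injective (fun j : (Finset.univ.filter fun j => c' j ≠ 0) =>
            (⟨j.1, (hmem j.1).mp j.2⟩ : {j : Fin k // c' j ≠ 0})) := by
          intro a b hab
          exact Subtype.ext (congrArg (fun x : {j : Fin k // c' j ≠ 0} => x.1) hab)
        exact hli.comp _ hf
      refine ⟨⟨_, hli'⟩, fun j => c' j.1, fun j => hc' j.1, ?_⟩
      rw [Fintype.linearCombination_apply, ← hsum]
      show ∑ i : (Finset.univ.filter fun j => c' j ≠ 0),
        c' i.1 • w i.1 = ∑ j : Fin k, c' j • w j
      rw [Finset.univ_eq_attach, Finset.sum_attach _ (fun j => c' j • w j)]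
      exact Finset.sum_filter_of_ne (fun j _ hj => fun h => hj (by simp [h]))
    · rintro ⟨⟨s, hli⟩, c, hc, rfl⟩
      refine ⟨fun j => if h : j ∈ s then c ⟨j, h⟩ else 0, ?_, ?_⟩
      · intro j
        by_cases h : j ∈ s
        · simpa [h] using hc ⟨j, h⟩
        · simp [h]
      · rw [Fintype.linearCombination_apply]
        show ∑ j : Fin k, (fun j => if h : j ∈ s then c ⟨j, h⟩ else 0) j • w j
          = ∑ i : {x // x ∈ s}, c i • w i.1
        have h1 : ∑ j ∈ s, (fun j => if h : j ∈ s then c ⟨j, h⟩ else 0) j • w j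
            = ∑ i : {x // x ∈ s}, c i • w i.1 := by
          rw [Finset.sum_subtype s (fun j => Iff.rfl)]
          apply Finset.sum_congr rfl
          intro i _
          simp [i.2]
        rw [← h1]
        refine (Finset.sum_subset (Finset.subset_univ s) ?_).symm
        intro j _ hj
        simp [hj]
  rw [key]
  apply isClosed_iUnion_of_finite
  rintro ⟨s, hli⟩
  have hinj : LinearMap.ker (Fintype.linearCombination ℝ (fun j : s => w j)) = ⊥ := by
    rw [LinearMap.ker_eq_bot']
    intro m hm
    rw [Fintype.linearCombination_apply] at hm
    exact funext (Fintype.linearIndependent_iff.mp hli m hm)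
  have hemb := LinearMap.isClosedEmbedding_of_injective (𝕜 := ℝ) hinj
  apply hemb.isClosedMap
  have : {c : s → ℝ | ∀ j, 0 ≤ c j} = ⋂ j : s, {c : s → ℝ | 0 ≤ c j} := by
    ext c; simp [Set.mem_iInter]
  rw [this]
  exact isClosed_iInter fun j => isClosed_le continuous_const (continuous_apply j)

theorem eutactic_iff_pos_combination_zero
    {E : Type*} [NormedAddCommGroup E] [InnerProductSpace ℝ E]
    [FiniteDimensional ℝ E] {k : ℕ} (w : Fin k → E) :
    (∃ a : Fin k → ℝ, (∀ i, 0 < a i) ∧ ∑ i, a i • w i = 0) ↔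
    (∀ v : E, (∀ i, (inner ℝ v (w i) : ℝ) = 0) ∨
      (∃ i, 0 < (inner ℝ v (w i) : ℝ)) ∧ (∃ j, (inner ℝ v (w j) : ℝ) < 0)) := by
  classical
  constructor
  · rintro ⟨a, ha, hsum⟩ v
    by_cases hz : ∀ i, (inner ℝ v (w i) : ℝ) = 0
    · exact Or.inl hz
    right
    push_neg at hz
    obtain ⟨i0, hi0⟩ := hz
    have hsum' : ∑ i, a i * (inner ℝ v (w i) : ℝ) = 0 := by
      have := congrArg (fun x => (inner ℝ v x : ℝ)) hsum
      simpa [inner_sum, real_inner_smul_right] using this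
    constructor
    · by_contra h
      push_neg at h
      have hlt : ∑ i, a i * (inner ℝ v (w i) : ℝ) < ∑ _i : Fin k, (0 : ℝ) := by
        apply Finset.sum_lt_sum
        · intro i _
          exact mul_nonpos_of_nonneg_of_nonpos (ha i).le (h i)
        · refine ⟨i0, Finset.mem_univ _, ?_⟩
          exact mul_neg_of_pos_of_neg (ha i0) (lt_of_le_of_ne (h i0) hi0)
      simp [hsum'] at hlt
    · by_contra h
      push_neg at h
      have hlt : ∑ _i : Fin k, (0 : ℝ) < ∑ i, a i * (inner ℝ v (w i) : ℝ) := by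
        apply Finset.sum_lt_sum
        · intro i _
          exact mul_nonneg (ha i).le (h i)
        · refine ⟨i0, Finset.mem_univ _, ?_⟩
          exact mul_pos (ha i0) (lt_of_le_of_ne (h i0) (Ne.symm hi0))
      simp [hsum'] at hlt
  · intro H
    set K : ConvexCone ℝ E :=
      { carrier := {x : E | ∃ c : Fin k → ℝ, (∀ j, 0 ≤ c j) ∧ ∑ j, c j • w j = x}
        smul_mem' := by
          rintro r hr x ⟨c, hc, rfl⟩
          exact ⟨fun j => r * c j, fun j => mul_nonneg hr.le (hc j),
            by simp [Finset.smul_sum, mul_smul]⟩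
        add_mem' := by
          rintro x ⟨c, hc, rfl⟩ y ⟨c', hc', rfl⟩
          exact ⟨fun j => c j + c' j, fun j => add_nonneg (hc j) (hc' j),
            by simp [add_smul, Finset.sum_add_distrib]⟩ } with hK
    have hne : (K : Set E).Nonempty := ⟨0, ⟨0, fun j => le_rfl, by simp⟩⟩
    have hcl : IsClosed (K : Set E) := cone_isClosed w
    have hwK : ∀ j, w j ∈ K := by
      intro j
      refine ⟨fun l => if l = j then 1 else 0, fun l => by positivity, ?_⟩
      simp [ite_smul]
    have hmem : ∀ i, -w i ∈ K := by
      intro i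
      by_contra hnm
      let C : ProperCone ℝ E :=
        { toSubmodule :=
            { carrier := (K : Set E)
              add_mem' := fun hx hy => K.add_mem hx hy
              zero_mem' := hne.elim fun _ _ => ⟨0, fun j => le_rfl, by simp⟩
              smul_mem' := by
                rintro r x ⟨c, hc, rfl⟩
                exact ⟨fun j => (r : ℝ) * c j, fun j => mul_nonneg r.2 (hc j),
                  by simp [Finset.smul_sum, mul_smul]⟩ }
          isClosed' := hcl }
      obtain ⟨y, hy1, hy2⟩ :=
        C.hyperplane_separation' (x₀ := -w i) hnm
      have hyi : 0 < (inner ℝ y (w i) : ℝ) := by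
        rw [inner_neg_left, real_inner_comm] at hy2
        linarith
      have hynn : ∀ j, 0 ≤ (inner ℝ y (w j) : ℝ) := by
        intro j
        have := hy1 (w j) (hwK j)
        rwa [real_inner_comm] at this
      rcases H y with h | ⟨_, j, hj⟩
      · exact absurd (h i) (ne_of_gt hyi)
      · exact absurd (hynn j) (not_le.mpr hj)
    choose c hc hcsum using hmem
    refine ⟨fun j => 1 + ∑ i, c i j, fun j => ?_, ?_⟩
    · show 0 < 1 + ∑ i, c i j
      have : 0 ≤ ∑ i, c i j := Finset.sum_nonneg fun i _ => hc i j
      linarith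
    have h1 : ∑ j, (1 + ∑ i, c i j) • w j
        = ∑ j, w j + ∑ i, ∑ j, c i j • w j := by
      simp only [add_smul, one_smul, Finset.sum_add_distrib, Finset.sum_smul]
      rw [Finset.sum_comm]
    rw [h1]
    have h2 : ∑ i, ∑ j, c i j • w j = -∑ i, w i := by
      rw [← Finset.sum_neg_distrib]
      exact Finset.sum_congr rfl fun i _ => hcsum i
    rw [h2, add_neg_cancel]
end

section
/- Define f_1, f_2, f_3, f_4 : ℝ^4 → ℝ by f_1(x) = e^{x_1} + e^{−x_2}, f_2(x) = e^{x_2} + e^{−x_3}, f_3(x) = e^{−x_3} + e^{x_4}, f_4(x) = e^{−x_4} + e^{x_1}. Then the gradients ∇f_1(p), ∇f_2(p), ∇f_3(p), ∇f_4(p) are linearly dependent if and only if p_2 = p_4; in that case ∇f_1 + e^{−2p_2}∇f_2 − e^{−2p_2}∇f_3 − ∇f_4 = 0 at p. -/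
noncomputable def paperF : Fin 4 → EuclideanSpace ℝ (Fin 4) → ℝ
  | 0 => fun x => Real.exp (x 0) + Real.exp (-(x 1))
  | 1 => fun x => Real.exp (x 1) + Real.exp (-(x 2))
  | 2 => fun x => Real.exp (-(x 2)) + Real.exp (x 3)
  | 3 => fun x => Real.exp (-(x 3)) + Real.exp (x 0)

/-!
The four gradients are the rows of the Jacobian matrix of `paperF`, whose determinant is
`e^{p₀ - p₂} (e^{p₁ - p₃} - e^{p₃ - p₁})`; it vanishes exactly when `p₁ = p₃`.
-/

open Real

theorem Matrix.linearIndependent_toLp_rows_iff_det_ne_zero {m K : Type*} [Fintype m]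
    [DecidableEq m] [Field K] (q : ENNReal) (A : Matrix m m K) :
    LinearIndependent K (fun i => WithLp.toLp q (A i)) ↔ A.det ≠ 0 := by
  rw [← isUnit_iff_ne_zero, ← Matrix.isUnit_iff_isUnit_det,
    ← Matrix.linearIndependent_rows_iff_isUnit]
  exact (WithLp.linearEquiv q K (m → K)).symm.toLinearMap.linearIndependent_iff_of_injOn
    (by simp)

theorem HasGradientAt.add {𝕜 F : Type*} [RCLike 𝕜] [NormedAddCommGroup F]
    [InnerProductSpace 𝕜 F] [CompleteSpace F] {f g : F → 𝕜} {f' g' x : F}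
    (hf : HasGradientAt f f' x) (hg : HasGradientAt g g' x) :
    HasGradientAt (fun y => f y + g y) (f' + g') x := by
  rw [hasGradientAt_iff_hasFDerivAt, map_add]
  exact hf.hasFDerivAt.add hg.hasFDerivAt

theorem HasDerivAt.hasGradientAt_comp_apply {ι : Type*} [Fintype ι] [DecidableEq ι]
    {f : ℝ → ℝ} {f' : ℝ} {p : EuclideanSpace ℝ ι} {i : ι} (hf : HasDerivAt f f' (p i)) :
    HasGradientAt (fun x : EuclideanSpace ℝ ι => f (x i)) (EuclideanSpace.single i f') p := by
  rw [hasGradientAt_iff_hasFDerivAt]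
  refine (hf.comp_hasFDerivAt p
    (EuclideanSpace.proj i : EuclideanSpace ℝ ι →L[ℝ] ℝ).hasFDerivAt).congr_fderiv ?_
  ext y
  simp [EuclideanSpace.inner_single_left]

theorem hasGradientAt_exp_apply {ι : Type*} [Fintype ι] [DecidableEq ι]
    (p : EuclideanSpace ℝ ι) (i : ι) :
    HasGradientAt (fun x : EuclideanSpace ℝ ι => exp (x i))
      (EuclideanSpace.single i (exp (p i))) p :=
  (hasDerivAt_exp _).hasGradientAt_comp_apply

theorem hasGradientAt_exp_neg_apply {ι : Type*} [Fintype ι] [DecidableEq ι]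
    (p : EuclideanSpace ℝ ι) (i : ι) :
    HasGradientAt (fun x : EuclideanSpace ℝ ι => exp (-x i))
      (EuclideanSpace.single i (-exp (-p i))) p := by
  simpa using ((hasDerivAt_neg (p i)).exp).hasGradientAt_comp_apply

noncomputable def paperJacobian (p : EuclideanSpace ℝ (Fin 4)) : Matrix (Fin 4) (Fin 4) ℝ :=
  !![exp (p 0), -exp (-p 1), 0, 0;
     0, exp (p 1), -exp (-p 2), 0;
     0, 0, -exp (-p 2), exp (p 3);
     exp (p 0), 0, 0, -exp (-p 3)]

theorem gradient_paperF (p : EuclideanSpace ℝ (Fin 4)) (i : Fin 4) :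
    gradient (paperF i) p = WithLp.toLp 2 (paperJacobian p i) := by
  fin_cases i
  · refine ((hasGradientAt_exp_apply p 0).add (hasGradientAt_exp_neg_apply p 1)).gradient
      |>.trans ?_
    ext j; fin_cases j <;> simp [paperJacobian]
  · refine ((hasGradientAt_exp_apply p 1).add (hasGradientAt_exp_neg_apply p 2)).gradient
      |>.trans ?_
    ext j; fin_cases j <;> simp [paperJacobian]
  · refine ((hasGradientAt_exp_neg_apply p 2).add (hasGradientAt_exp_apply p 3)).gradient
      |>.trans ?_
    ext j; fin_cases j <;> simp [paperJacobian]
  · refine ((hasGradientAt_exp_neg_apply p 3).add (hasGradientAt_exp_apply p 0)).gradient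
      |>.trans ?_
    ext j; fin_cases j <;> simp [paperJacobian]

theorem det_paperJacobian (p : EuclideanSpace ℝ (Fin 4)) :
    (paperJacobian p).det =
      exp (p 0) * exp (-p 2) * (exp (p 1) * exp (-p 3) - exp (-p 1) * exp (p 3)) := by
  simp [paperJacobian, Matrix.det_succ_row_zero, Fin.sum_univ_succ, Fin.succAbove]
  ring

theorem det_paperJacobian_eq_zero_iff (p : EuclideanSpace ℝ (Fin 4)) :
    (paperJacobian p).det = 0 ↔ p 1 = p 3 := by
  rw [det_paperJacobian, mul_eq_zero, or_iff_right (by positivity), sub_eq_zero, ← exp_add,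
    ← exp_add, exp_eq_exp]
  constructor <;> intro h <;> linarith

theorem paperJacobian_rows_relation {p : EuclideanSpace ℝ (Fin 4)} (h : p 1 = p 3) :
    paperJacobian p 0 + exp (-(2 * p 1)) • paperJacobian p 1
      - exp (-(2 * p 1)) • paperJacobian p 2 - paperJacobian p 3 = 0 := by
  ext j
  fin_cases j <;> simp [paperJacobian, ← h, ← exp_add] <;> ring_nf

theorem gradients_dependent_iff_eq
    (p : EuclideanSpace ℝ (Fin 4)) :
    (¬ LinearIndependent ℝ (fun i => gradient (paperF i) p) ↔ p 1 = p 3) ∧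
    (p 1 = p 3 →
      gradient (paperF 0) p + Real.exp (-(2 * p 1)) • gradient (paperF 1) p
        - Real.exp (-(2 * p 1)) • gradient (paperF 2) p - gradient (paperF 3) p = 0) := by
  simp only [gradient_paperF]
  refine ⟨?_, fun h => ?_⟩
  · rw [Matrix.linearIndependent_toLp_rows_iff_det_ne_zero, not_not,
      det_paperJacobian_eq_zero_iff]
  · simpa using congrArg (WithLp.toLp 2) (paperJacobian_rows_relation h)
end

section
/- With f_1, f_2, f_3, f_4 : ℝ^4 → ℝ defined by f_1(x) = e^{x_1} + e^{−x_2}, f_2(x) = e^{x_2} + e^{−x_3}, f_3(x) = e^{−x_3} + e^{x_4}, f_4(x) = e^{−x_4} + e^{x_1}: for every p ∈ ℝ^4 and every index i ∈ {1,2,3,4}, there exists a vector v ∈ ℝ^4 such that ⟨∇f_i(p), v⟩ < 0 and ⟨∇f_j(p), v⟩ > 0 for all j ≠ i. -/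
section aux

abbrev E4 := EuclideanSpace ℝ (Fin 4)

lemma inner_gradient_of_hasFDerivAt {f : E4 → ℝ} {L : E4 →L[ℝ] ℝ} {p v : E4}
    (h : HasFDerivAt f L p) : (inner ℝ (gradient f p) v : ℝ) = L v := by
  rw [gradient, h.fderiv, InnerProductSpace.toDual_symm_apply]

lemma hasF_exp (c : Fin 4) (p : E4) :
    HasFDerivAt (fun x : E4 => Real.exp (x c))
      (Real.exp (p c) • (EuclideanSpace.proj c : E4 →L[ℝ] ℝ)) p :=
  (EuclideanSpace.proj c : E4 →L[ℝ] ℝ).hasFDerivAt.exp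

lemma hasF_expneg (c : Fin 4) (p : E4) :
    HasFDerivAt (fun x : E4 => Real.exp (-(x c)))
      (Real.exp (-(p c)) • (-(EuclideanSpace.proj c : E4 →L[ℝ] ℝ))) p :=
  (EuclideanSpace.proj c : E4 →L[ℝ] ℝ).hasFDerivAt.neg.exp

lemma fin4_cases (i : Fin 4) : i = 0 ∨ i = 1 ∨ i = 2 ∨ i = 3 := by
  fin_cases i <;> simp

end aux

theorem exists_decreasing_direction_for_each
    (p : EuclideanSpace ℝ (Fin 4)) (i : Fin 4) :
    ∃ v : EuclideanSpace ℝ (Fin 4),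
      (inner ℝ (gradient (paperF i) p) v : ℝ) < 0 ∧
      ∀ j : Fin 4, j ≠ i → 0 < (inner ℝ (gradient (paperF j) p) v : ℝ) := by
  have e0 := Real.exp_pos (p 0)
  have e1 := Real.exp_pos (p 1)
  have e2 := Real.exp_pos (p 2)
  have e3 := Real.exp_pos (p 3)
  have n1 := Real.exp_pos (-(p 1))
  have n2 := Real.exp_pos (-(p 2))
  have n3 := Real.exp_pos (-(p 3))
  have h0 : ∀ v : E4, (inner ℝ (gradient (paperF 0) p) v : ℝ)
      = Real.exp (p 0) * v 0 - Real.exp (-(p 1)) * v 1 := by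
    intro v
    rw [show paperF 0 = fun x : E4 => Real.exp (x 0) + Real.exp (-(x 1)) from rfl,
      inner_gradient_of_hasFDerivAt (f := fun x : E4 => Real.exp (x 0) + Real.exp (-(x 1))) ((hasF_exp 0 p).add (hasF_expneg 1 p))]
    simp; try ring
  have h1 : ∀ v : E4, (inner ℝ (gradient (paperF 1) p) v : ℝ)
      = Real.exp (p 1) * v 1 - Real.exp (-(p 2)) * v 2 := by
    intro v
    rw [show paperF 1 = fun x : E4 => Real.exp (x 1) + Real.exp (-(x 2)) from rfl,
      inner_gradient_of_hasFDerivAt (f := fun x : E4 => Real.exp (x 1) + Real.exp (-(x 2))) ((hasF_exp 1 p).add (hasF_expneg 2 p))]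
    simp; try ring
  have h2 : ∀ v : E4, (inner ℝ (gradient (paperF 2) p) v : ℝ)
      = -(Real.exp (-(p 2)) * v 2) + Real.exp (p 3) * v 3 := by
    intro v
    rw [show paperF 2 = fun x : E4 => Real.exp (-(x 2)) + Real.exp (x 3) from rfl,
      inner_gradient_of_hasFDerivAt (f := fun x : E4 => Real.exp (-(x 2)) + Real.exp (x 3)) ((hasF_expneg 2 p).add (hasF_exp 3 p))]
    simp; try ring
  have h3 : ∀ v : E4, (inner ℝ (gradient (paperF 3) p) v : ℝ)
      = -(Real.exp (-(p 3)) * v 3) + Real.exp (p 0) * v 0 := by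
    intro v
    rw [show paperF 3 = fun x : E4 => Real.exp (-(x 3)) + Real.exp (x 0) from rfl,
      inner_gradient_of_hasFDerivAt (f := fun x : E4 => Real.exp (-(x 3)) + Real.exp (x 0)) ((hasF_expneg 3 p).add (hasF_exp 0 p))]
    simp; try ring
  rcases fin4_cases i with rfl | rfl | rfl | rfl
  · refine ⟨(WithLp.toLp 2 ![1, 2 * Real.exp (p 0) / Real.exp (-(p 1)), -1, 0] : E4), ?_, ?_⟩
    · rw [h0]; simp
      rw [mul_div_cancel₀ _ (ne_of_gt n1)] at *
      nlinarith
    · intro j hj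
      rcases fin4_cases j with rfl | rfl | rfl | rfl
      · exact absurd rfl hj
      · rw [h1]; simp; positivity
      · rw [h2]; simp; positivity
      · rw [h3]; simp; positivity
  · refine ⟨(WithLp.toLp 2 ![2 * Real.exp (-(p 3)) / Real.exp (p 0), -1, 0, 1] : E4), ?_, ?_⟩
    · rw [h1]; simp; positivity
    · intro j hj
      rcases fin4_cases j with rfl | rfl | rfl | rfl
      · rw [h0]; simp
        rw [mul_div_cancel₀ _ (ne_of_gt e0)] at *
        nlinarith
      · exact absurd rfl hj
      · rw [h2]; simp; positivity
      · rw [h3]; simp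
        rw [mul_div_cancel₀ _ (ne_of_gt e0)] at *
        nlinarith
  · refine ⟨(WithLp.toLp 2 ![2 * Real.exp (-(p 1)) / Real.exp (p 0), 1, 0, -1] : E4), ?_, ?_⟩
    · rw [h2]; simp; positivity
    · intro j hj
      rcases fin4_cases j with rfl | rfl | rfl | rfl
      · rw [h0]; simp
        rw [mul_div_cancel₀ _ (ne_of_gt e0)] at *
        nlinarith
      · rw [h1]; simp; positivity
      · exact absurd rfl hj
      · rw [h3]; simp
        rw [mul_div_cancel₀ _ (ne_of_gt e0)] at *
        nlinarith
  · refine ⟨(WithLp.toLp 2 ![0, -1, -(2 * Real.exp (p 1) / Real.exp (-(p 2))), 1] : E4), ?_, ?_⟩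
    · rw [h3]; simp; positivity
    · intro j hj
      rcases fin4_cases j with rfl | rfl | rfl | rfl
      · rw [h0]; simp; positivity
      · rw [h1]; simp
        rw [mul_div_cancel₀ _ (ne_of_gt n2)] at *
        nlinarith
      · rw [h2]; simp
        rw [mul_div_cancel₀ _ (ne_of_gt n2)] at *
        nlinarith
      · exact absurd rfl hj
end
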